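/- Suppose φ : Ω → ℝ is continuous and has the extensibility property. Then the family γ^φ = (γ^φ_Λ) defined by γ^φ_Λ(ω_Λ | ω_{Λ^c}) = (Σ_{ξ_Λ ∈ E^Λ} exp ρ^φ(ξ_Λ ω_{ℤ∖Λ}, ω))^{-1} is a translation-invariant Gibbsian specification on Ω: each γ^φ_Λ(·|ω_{Λ^c}) is a probability distribution on E^Λ, the family is consistent, non-null, continuous, and satisfies γ^φ_{Λ+1} = γ^φ_Λ ∘ S. -/

import Mathlib

open Filter Topology MeasureTheory

namespace GP

/-- The configuration space `Ω = E^ℤ`. -/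
abbrev Conf (E : Type*) := ℤ → E

variable {E : Type*}

/-- The shift by `i`: `(shiftZ i ω) k = ω (k + i)`.  The left shift `S` is `shiftZ 1`. -/
def shiftZ (i : ℤ) (ω : Conf E) : Conf E := fun k => ω (k + i)

/-- The cylinder set determined by a word `w ∈ E^n` (placed on coordinates `0,…,n-1`). -/
def cylW {n : ℕ} (w : Fin n → E) : Set (Conf E) := {ω | ∀ j : Fin n, ω ((j : ℕ) : ℤ) = w j}

/-- The cylinder set `[ω_0^{n-1}]`. -/
def cylPt (ω : Conf E) (n : ℕ) : Set (Conf E) :=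
  {ω' | ∀ j : ℕ, j < n → ω' (j : ℤ) = ω (j : ℤ)}

/-- Birkhoff sum `S_n φ = ∑_{k=0}^{n-1} φ ∘ S^k`. -/
def birk (φ : Conf E → ℝ) (n : ℕ) (ω : Conf E) : ℝ :=
  ∑ k ∈ Finset.range n, φ (shiftZ (k : ℤ) ω)

/-- Topological pressure of `φ` on the full shift:
`P(φ) = lim_n (1/n) log ∑_{w ∈ E^n} sup_{ω ∈ [w]} exp (S_n φ (ω))`
(the limit exists; we use `limsup` as the defining expression). -/
noncomputable def press [Fintype E] (φ : Conf E → ℝ) : ℝ :=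
  Filter.limsup (fun n : ℕ =>
    Real.log (∑ w : Fin n → E, sSup ((fun ω => Real.exp (birk φ n ω)) '' cylW w)) / n) atTop

/-- Kolmogorov–Sinai entropy of a shift-invariant measure on the full shift,
computed along the canonical generating partition into cylinders
(the limit exists; we use `limsup` as the defining expression). -/
noncomputable def ent [Fintype E] [MeasurableSpace E] (μ : Measure (Conf E)) : ℝ :=
  Filter.limsup (fun n : ℕ =>
    (- ∑ w : Fin n → E, ((μ (cylW w)).toReal * Real.log (μ (cylW w)).toReal)) / n) atTop

/-- Shift invariance of a measure. -/
def ShiftInv [MeasurableSpace E] (μ : Measure (Conf E)) : Prop :=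
  Measure.map (shiftZ 1) μ = μ

/-- `μ` is an equilibrium state for `φ`: `μ` is a shift-invariant Borel probability
measure with `h(μ) + ∫ φ dμ = P(φ)`. -/
def IsEquilibrium [Fintype E] [MeasurableSpace E] (φ : Conf E → ℝ)
    (μ : Measure (Conf E)) : Prop :=
  IsProbabilityMeasure μ ∧ ShiftInv μ ∧ ent μ + ∫ ω, φ ω ∂μ = press φ

/-- `ω^c`: the configuration equal to `c` at site `0` and to `ω` elsewhere. -/
def upd0 (ω : Conf E) (c : E) : Conf E := Function.update ω 0 c

/-- Partial sums `ρ_n(ξ,η) = ∑_{i=-n}^{n} (φ(S^i ξ) - φ(S^i η))`. -/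
noncomputable def rhoN (φ : Conf E → ℝ) (ξ η : Conf E) (n : ℕ) : ℝ :=
  ∑ i ∈ Finset.Icc (-(n : ℤ)) (n : ℤ), (φ (shiftZ i ξ) - φ (shiftZ i η))

/-- `φ` has the extensibility property: for all `a b ∈ E`, the functions
`ω ↦ ∑_{i=-n}^{n} (φ(S^i(ω^b)) - φ(S^i(ω^a)))` converge uniformly as `n → ∞`. -/
def Extensible (φ : Conf E → ℝ) : Prop :=
  ∀ a b : E, ∃ r : Conf E → ℝ,
    TendstoUniformly (fun n ω => rhoN φ (upd0 ω b) (upd0 ω a) n) r atTop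

/-- The cocycle `ρ^φ(ξ,η) = lim_n ∑_{i=-n}^{n} (φ(S^i ξ) - φ(S^i η))`. -/
noncomputable def rho (φ : Conf E → ℝ) (ξ η : Conf E) : ℝ :=
  limUnder atTop (rhoN φ ξ η)

/-- `ξ` and `η` differ in at most finitely many coordinates. -/
def FinDiff (ξ η : Conf E) : Prop := {k : ℤ | ξ k ≠ η k}.Finite

/-- `ovr Λ ξ ω` is the configuration `ξ_Λ ω_{ℤ∖Λ}`, equal to `ξ` on `Λ` and to `ω` off `Λ`. -/
def ovr (Λ : Finset ℤ) (ξ : {k // k ∈ Λ} → E) (ω : Conf E) : Conf E :=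
  fun k => if h : k ∈ Λ then ξ ⟨k, h⟩ else ω k

/-- `γ` is a specification: each `γ_Λ(·|ω_{Λ^c})` is a probability distribution on `E^Λ`,
and the family is consistent (`γ_Λ = γ_Λ ∘ γ_V` for `V ⊆ Λ`); here `γ Λ ω` denotes
`γ_Λ(ω_Λ | ω_{Λ^c})`. -/
def IsSpecification [Fintype E] (γ : Finset ℤ → Conf E → ℝ) : Prop :=
  (∀ (Λ : Finset ℤ) (ω : Conf E), 0 ≤ γ Λ ω) ∧
  (∀ (Λ : Finset ℤ) (ω : Conf E), ∑ ξ : {k // k ∈ Λ} → E, γ Λ (ovr Λ ξ ω) = 1) ∧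
  (∀ V Λ : Finset ℤ, V ⊆ Λ → ∀ ω : Conf E,
     γ Λ ω = (∑ η : {k // k ∈ V} → E, γ Λ (ovr V η ω)) * γ V ω)

/-- Non-nullness: `inf_ω γ_Λ(ω_Λ|ω_{Λ^c}) > 0` for every finite `Λ`. -/
def NonNull (γ : Finset ℤ → Conf E → ℝ) : Prop :=
  ∀ Λ : Finset ℤ, ∃ c > (0 : ℝ), ∀ ω : Conf E, c ≤ γ Λ ω

/-- Continuity (quasilocality): `ω ↦ γ_Λ(ω_Λ|ω_{Λ^c})` is continuous for every finite `Λ`. -/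
def ContSpec [TopologicalSpace E] (γ : Finset ℤ → Conf E → ℝ) : Prop :=
  ∀ Λ : Finset ℤ, Continuous (γ Λ)

/-- A Gibbsian specification: a non-null continuous specification. -/
def IsGibbsSpec [Fintype E] [TopologicalSpace E] (γ : Finset ℤ → Conf E → ℝ) : Prop :=
  IsSpecification γ ∧ NonNull γ ∧ ContSpec γ

/-- Translation invariance of a specification: `γ_{Λ+1} = γ_Λ ∘ S`. -/
def SpecTI (γ : Finset ℤ → Conf E → ℝ) : Prop :=
  ∀ (Λ : Finset ℤ) (ω : Conf E), γ (Λ.image (· + 1)) ω = γ Λ (shiftZ 1 ω)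

/-- `μ` is a DLR-Gibbs measure for the specification `γ`: `μ` is a Borel probability
measure satisfying the DLR equations `∫ γ_Λ(f|·) dμ = ∫ f dμ` for every finite `Λ`
and every continuous `f` (equivalently, each `γ_Λ` is a version of the conditional
probabilities of `μ`). -/
def IsDLRGibbs [Fintype E] [MeasurableSpace E] [TopologicalSpace E]
    (γ : Finset ℤ → Conf E → ℝ) (μ : Measure (Conf E)) : Prop :=
  IsProbabilityMeasure μ ∧
  ∀ (Λ : Finset ℤ) (f : Conf E → ℝ), Continuous f →
    ∫ ω, (∑ ξ : {k // k ∈ Λ} → E, γ Λ (ovr Λ ξ ω) * f (ovr Λ ξ ω)) ∂μ = ∫ ω, f ω ∂μ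

/-- The specification `γ^φ` associated with an extensible potential `φ`:
`γ^φ_Λ(ω_Λ|ω_{Λ^c}) = (∑_{ξ_Λ ∈ E^Λ} exp ρ^φ(ξ_Λ ω_{ℤ∖Λ}, ω))⁻¹`. -/
noncomputable def specOf [Fintype E] (φ : Conf E → ℝ) : Finset ℤ → Conf E → ℝ :=
  fun Λ ω => (∑ ξ : {k // k ∈ Λ} → E, Real.exp (rho φ (ovr Λ ξ ω) ω))⁻¹

/-- The configuration `𝐚_{-∞}^{-1} b ω_1^{∞}`: equal to `a` at all negative
coordinates, to `b` at coordinate `0`, and to `ω` at positive coordinates. -/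
def bca (a : E) (ω : Conf E) (b : E) : Conf E :=
  fun k => if k < 0 then a else if k = 0 then b else ω k

/-- The potential associated with a specification:
`φ_γ(ω) = log (γ_{{0}}(ω_0 | 𝐚_{-∞}^{-1} ω_1^{∞}) / γ_{{0}}(a | 𝐚_{-∞}^{-1} ω_1^{∞}))`. -/
noncomputable def phiOf (γ : Finset ℤ → Conf E → ℝ) (a : E) (ω : Conf E) : ℝ :=
  Real.log (γ ({0} : Finset ℤ) (bca a ω (ω 0)) / γ ({0} : Finset ℤ) (bca a ω a))

/-- `μ` is weak Bowen-Gibbs for `φ` with constant `P`. -/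
def WeakBowenGibbs [MeasurableSpace E] (μ : Measure (Conf E)) (φ : Conf E → ℝ)
    (P : ℝ) : Prop :=
  ∃ C : ℕ → ℝ, (∀ n, 0 < C n) ∧
    Tendsto (fun n : ℕ => Real.log (C n) / n) atTop (𝓝 0) ∧
    ∀ (n : ℕ) (ω : Conf E),
      (C n)⁻¹ ≤ (μ (cylPt ω n)).toReal / Real.exp (birk φ n ω - n * P) ∧
      (μ (cylPt ω n)).toReal / Real.exp (birk φ n ω - n * P) ≤ C n

/-!
The cocycle `ρ^φ(ξ, η)` exists for every pair of configurations differing at finitely many sites: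
changing one site at a time, each step is a single-site cocycle, i.e. a shift of the limit
granted by extensibility. Shifting the summation window of `∑_{-n}^{n}` changes the sum by
finitely many boundary terms `φ(S^i ξ) - φ(S^i η)` with `|i| → ∞`, and these tend to `0` because
`Ω` is compact and `S^i ξ`, `S^i η` agree on ever larger windows. Hence `ρ^φ` is a shift-invariant
cocycle, and each single-site cocycle depends continuously on `ω` since it is a uniform limit of
continuous functions and `E` is discrete. Writing `γ^φ_Λ = Z_Λ⁻¹` with the partition function
`Z_Λ(ω) = ∑_{ξ_Λ} exp ρ^φ(ξ_Λ ω_{ℤ∖Λ}, ω)`, the cocycle identity gives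
`Z_Λ(η_V ω_{ℤ∖V}) = exp(-ρ^φ(η_V ω_{ℤ∖V}, ω)) Z_Λ(ω)` for `V ⊆ Λ`, which yields normalisation and
consistency; continuity of `Z_Λ` on the compact space `Ω` yields non-nullness.
-/

open Finset Function

lemma shiftZ_shiftZ (i j : ℤ) (ω : Conf E) : shiftZ i (shiftZ j ω) = shiftZ (i + j) ω := by
  funext k
  simp only [shiftZ, add_assoc]

lemma update_eq_shiftZ_upd0 (ζ : Conf E) (j : ℤ) (c : E) :
    update ζ j c = shiftZ (-j) (upd0 (shiftZ j ζ) c) := by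
  funext k
  by_cases hk : k = j
  · subst hk
    simp [shiftZ, upd0]
  · have : k + -j ≠ 0 := by omega
    simp [shiftZ, upd0, hk, this]

lemma ovr_eq_piecewise (Λ : Finset ℤ) (ξ : {k // k ∈ Λ} → E) (ω ω' : Conf E) :
    ovr Λ ξ ω = Λ.piecewise (ovr Λ ξ ω') ω := by
  funext k
  by_cases hk : k ∈ Λ <;> simp [ovr, hk]

lemma ovr_ovr {V Λ : Finset ℤ} (hVΛ : V ⊆ Λ) (ξ : {k // k ∈ Λ} → E)
    (η : {k // k ∈ V} → E) (ω : Conf E) : ovr Λ ξ (ovr V η ω) = ovr Λ ξ ω := by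
  funext k
  by_cases hk : k ∈ Λ
  · simp [ovr, hk]
  · simp [ovr, hk, show k ∉ V from fun h => hk (hVΛ h)]

lemma FinDiff.symm {ξ η : Conf E} (h : FinDiff ξ η) : FinDiff η ξ := by
  simpa only [FinDiff, ne_comm] using h

lemma FinDiff.trans {ξ η ζ : Conf E} (h₁ : FinDiff ξ η) (h₂ : FinDiff η ζ) : FinDiff ξ ζ :=
  (h₁.union h₂).subset fun k hk => by
    by_contra h
    simp_all

lemma finDiff_update (ζ : Conf E) (j : ℤ) (c : E) : FinDiff (update ζ j c) ζ :=
  (Set.finite_singleton j).subset fun k hk => by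
    by_contra h
    simp_all

lemma finDiff_piecewise (F : Finset ℤ) (ξ ω : Conf E) : FinDiff (F.piecewise ξ ω) ω :=
  F.finite_toSet.subset fun k hk => by
    by_contra h
    simp_all

lemma finDiff_ovr (Λ : Finset ℤ) (ξ : {k // k ∈ Λ} → E) (ω : Conf E) : FinDiff (ovr Λ ξ ω) ω :=
  Λ.finite_toSet.subset fun k hk => by
    by_contra h
    simp_all [ovr]

lemma rhoN_add (φ : Conf E → ℝ) (ξ η ζ : Conf E) (n : ℕ) :
    rhoN φ ξ ζ n = rhoN φ ξ η n + rhoN φ η ζ n := by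
  simp only [rhoN, ← sum_add_distrib, sub_add_sub_cancel]

lemma rhoN_self (φ : Conf E → ℝ) (ξ : Conf E) : rhoN φ ξ ξ = 0 := by
  funext n
  simp [rhoN]

lemma rho_self (φ : Conf E → ℝ) (ξ : Conf E) : rho φ ξ ξ = 0 := by
  simp only [rho, rhoN_self]
  exact tendsto_const_nhds.limUnder_eq

lemma Extensible.tendsto_rhoN_upd0 {φ : Conf E → ℝ} (hφe : Extensible φ) (a b : E) (ω : Conf E) :
    Tendsto (rhoN φ (upd0 ω b) (upd0 ω a)) atTop (𝓝 (rho φ (upd0 ω b) (upd0 ω a))) := by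
  obtain ⟨r, hr⟩ := hφe a b
  exact tendsto_nhds_limUnder ⟨r ω, hr.tendsto_at ω⟩

lemma continuous_shiftZ [TopologicalSpace E] (i : ℤ) : Continuous (shiftZ i : Conf E → Conf E) :=
  continuous_pi fun k => continuous_apply (k + i)

lemma continuous_piecewise_right [TopologicalSpace E] (F : Finset ℤ) (ξ : Conf E) :
    Continuous fun ω : Conf E => F.piecewise ξ ω :=
  continuous_pi fun k => by
    by_cases hk : k ∈ F
    · simpa [hk] using continuous_const
    · simpa [hk] using continuous_apply k

lemma continuous_rhoN [TopologicalSpace E] {X : Type*} [TopologicalSpace X] {φ : Conf E → ℝ}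
    (hφ : Continuous φ) {f g : X → Conf E} (hf : Continuous f) (hg : Continuous g) (n : ℕ) :
    Continuous fun x => rhoN φ (f x) (g x) n :=
  continuous_finsetSum _ fun i _ =>
    (hφ.comp ((continuous_shiftZ i).comp hf)).sub (hφ.comp ((continuous_shiftZ i).comp hg))

section SymmetricSums

variable {M : Type*} [AddCommGroup M]

lemma sum_Icc_comp_add_one (a : ℤ → M) (n : ℕ) :
    ∑ i ∈ Icc (-(n : ℤ)) n, a (i + 1) = ∑ i ∈ Icc (-(n : ℤ)) n, a i + (a (n + 1) - a (-n)) :=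
  calc ∑ i ∈ Icc (-(n : ℤ)) n, a (i + 1) = ∑ i ∈ Icc (-(n : ℤ) + 1) (n + 1), a i := by
        rw [← map_add_right_Icc, sum_map]
        rfl
    _ = ∑ i ∈ Icc (-(n : ℤ)) (n + 1), a i - a (-n) := by
        rw [← insert_Icc_add_one_left_eq_Icc (a := -(n : ℤ)) (b := n + 1) (by omega),
          sum_insert (by simp)]
        abel
    _ = _ := by
        rw [← insert_Icc_right_eq_Icc_add_one (a := -(n : ℤ)) (b := n) (by omega),
          sum_insert (by simp)]
        abel

variable [TopologicalSpace M] [IsTopologicalAddGroup M]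

lemma tendsto_sum_Icc_comp_add_one_iff {a : ℤ → M} (ha : Tendsto a cofinite (𝓝 0)) {L : M} :
    Tendsto (fun n : ℕ => ∑ i ∈ Icc (-(n : ℤ)) n, a (i + 1)) atTop (𝓝 L) ↔
      Tendsto (fun n : ℕ => ∑ i ∈ Icc (-(n : ℤ)) n, a i) atTop (𝓝 L) := by
  have hcomp : ∀ g : ℕ → ℤ, g.Injective → Tendsto (a ∘ g) atTop (𝓝 0) := fun g hg =>
    ha.comp (Nat.cofinite_eq_atTop ▸ hg.tendsto_cofinite)
  have hboundary : Tendsto (fun n : ℕ => a (n + 1) - a (-n)) atTop (𝓝 0) := by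
    simpa using (hcomp (fun n => n + 1) fun m n h => by simpa using h).sub
      (hcomp (fun n => -n) fun m n h => by simpa using h)
  simp only [sum_Icc_comp_add_one]
  exact ⟨fun h => by simpa using h.sub hboundary, fun h => by simpa using h.add hboundary⟩

lemma tendsto_sum_Icc_comp_add_iff {a : ℤ → M} (ha : Tendsto a cofinite (𝓝 0)) (j : ℤ)
    {L : M} :
    Tendsto (fun n : ℕ => ∑ i ∈ Icc (-(n : ℤ)) n, a (i + j)) atTop (𝓝 L) ↔
      Tendsto (fun n : ℕ => ∑ i ∈ Icc (-(n : ℤ)) n, a i) atTop (𝓝 L) := by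
  have hshift (j : ℤ) : Tendsto (fun i => a (i + j)) cofinite (𝓝 0) :=
    ha.comp (add_left_injective j).tendsto_cofinite
  induction j using Int.induction_on with
  | zero => simp
  | succ j ih =>
    have h := tendsto_sum_Icc_comp_add_one_iff (hshift j) (L := L)
    simp only [add_right_comm _ (1 : ℤ) j, add_assoc] at h
    exact h.trans ih
  | pred j ih =>
    have h := tendsto_sum_Icc_comp_add_one_iff (hshift (-j - 1)) (L := L)
    simp only [show ∀ i : ℤ, i + 1 + (-j - 1) = i + -j from fun i => by ring] at h
    exact h.symm.trans ih

end SymmetricSums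

section Cocycle

variable [TopologicalSpace E] [CompactSpace E] {φ : Conf E → ℝ}

lemma tendsto_sub_shiftZ_cofinite (hφc : Continuous φ) {ξ η : Conf E} (h : FinDiff ξ η) :
    Tendsto (fun i => φ (shiftZ i ξ) - φ (shiftZ i η)) cofinite (𝓝 0) := by
  rw [tendsto_iff_ultrafilter]
  intro u hu
  set x := (u.map fun i => shiftZ i ξ).lim
  have hξ : Tendsto (fun i => shiftZ i ξ) u (𝓝 x) := Ultrafilter.le_nhds_lim _
  have hη : Tendsto (fun i => shiftZ i η) u (𝓝 x) := by
    refine tendsto_pi_nhds.2 fun k => (tendsto_pi_nhds.1 hξ k).congr' (hu ?_)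
    exact mem_cofinite.2 ((h.preimage (add_right_injective k).injOn).subset fun i hi => hi)
  simpa using ((hφc.tendsto x).comp hξ).sub ((hφc.tendsto x).comp hη)

lemma tendsto_rhoN_shiftZ_iff (hφc : Continuous φ) {ξ η : Conf E} (h : FinDiff ξ η) (j : ℤ)
    {L : ℝ} :
    Tendsto (rhoN φ (shiftZ j ξ) (shiftZ j η)) atTop (𝓝 L) ↔
      Tendsto (rhoN φ ξ η) atTop (𝓝 L) := by
  have := tendsto_sum_Icc_comp_add_iff (tendsto_sub_shiftZ_cofinite hφc h) j (L := L)
  simp only [← shiftZ_shiftZ] at this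
  exact this

lemma tendsto_rhoN_update (hφc : Continuous φ) (hφe : Extensible φ) (ζ : Conf E) (j : ℤ)
    (a b : E) :
    Tendsto (rhoN φ (update ζ j b) (update ζ j a)) atTop
      (𝓝 (rho φ (upd0 (shiftZ j ζ) b) (upd0 (shiftZ j ζ) a))) := by
  have h : FinDiff (upd0 (shiftZ j ζ) b) (upd0 (shiftZ j ζ) a) :=
    (finDiff_update _ 0 b).trans (finDiff_update _ 0 a).symm
  rw [update_eq_shiftZ_upd0 ζ j b, update_eq_shiftZ_upd0 ζ j a, tendsto_rhoN_shiftZ_iff hφc h]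
  exact hφe.tendsto_rhoN_upd0 a b _

lemma exists_tendsto_rhoN_piecewise (hφc : Continuous φ) (hφe : Extensible φ) (F : Finset ℤ)
    (ξ η : Conf E) : ∃ L, Tendsto (rhoN φ (F.piecewise ξ η) η) atTop (𝓝 L) := by
  induction F using Finset.induction_on with
  | empty =>
    rw [piecewise_empty, rhoN_self]
    exact ⟨0, tendsto_const_nhds⟩
  | insert j F _ ih =>
    obtain ⟨L, hL⟩ := ih
    set P := F.piecewise ξ η
    refine ⟨_, ((tendsto_rhoN_update hφc hφe P j (P j) (ξ j)).add hL).congr fun n => ?_⟩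
    rw [piecewise_insert, update_eq_self, ← rhoN_add]

lemma tendsto_rhoN (hφc : Continuous φ) (hφe : Extensible φ) {ξ η : Conf E}
    (h : FinDiff ξ η) : Tendsto (rhoN φ ξ η) atTop (𝓝 (rho φ ξ η)) := by
  obtain ⟨L, hL⟩ := exists_tendsto_rhoN_piecewise hφc hφe h.toFinset ξ η
  have hξ : h.toFinset.piecewise ξ η = ξ := by
    funext k
    by_cases hk : ξ k = η k
    · simp [Finset.piecewise, hk]
    · simp [Finset.piecewise, h.mem_toFinset.2 hk]
  rw [hξ] at hL
  exact tendsto_nhds_limUnder ⟨L, hL⟩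

lemma rho_add (hφc : Continuous φ) (hφe : Extensible φ) {ξ η ζ : Conf E} (h₁ : FinDiff ξ η)
    (h₂ : FinDiff η ζ) : rho φ ξ ζ = rho φ ξ η + rho φ η ζ :=
  (((tendsto_rhoN hφc hφe h₁).add (tendsto_rhoN hφc hφe h₂)).congr fun n =>
    (rhoN_add φ ξ η ζ n).symm).limUnder_eq

lemma rho_eq_sub (hφc : Continuous φ) (hφe : Extensible φ) {ξ η ω : Conf E}
    (hξ : FinDiff ξ ω) (hη : FinDiff η ω) : rho φ ξ η = rho φ ξ ω - rho φ η ω :=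
  eq_sub_of_add_eq (rho_add hφc hφe (hξ.trans hη.symm) hη).symm

lemma rho_shiftZ (hφc : Continuous φ) (hφe : Extensible φ) {ξ η : Conf E} (h : FinDiff ξ η)
    (j : ℤ) : rho φ (shiftZ j ξ) (shiftZ j η) = rho φ ξ η :=
  ((tendsto_rhoN_shiftZ_iff hφc h j).2 (tendsto_rhoN hφc hφe h)).limUnder_eq

end Cocycle

section Continuity

variable [TopologicalSpace E] {φ : Conf E → ℝ}

lemma Extensible.continuous_rho_upd0 (hφc : Continuous φ) (hφe : Extensible φ) (a b : E) :
    Continuous fun ω => rho φ (upd0 ω b) (upd0 ω a) := by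
  obtain ⟨r, hr⟩ := hφe a b
  have hrho : (fun ω => rho φ (upd0 ω b) (upd0 ω a)) = r :=
    funext fun ω => (hr.tendsto_at ω).limUnder_eq
  rw [hrho]
  refine hr.continuous (Frequently.of_forall fun n => ?_)
  exact continuous_rhoN hφc (continuous_id.update 0 continuous_const)
    (continuous_id.update 0 continuous_const) n

variable [CompactSpace E] [DiscreteTopology E]

lemma continuous_rho_update (hφc : Continuous φ) (hφe : Extensible φ) (j : ℤ) (b : E) :
    Continuous fun ζ : Conf E => rho φ (update ζ j b) ζ := by
  have hpair : Continuous fun p : E × Conf E => rho φ (update p.2 j b) (update p.2 j p.1) := by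
    refine continuous_prod_of_discrete_left.2 fun a => ?_
    have h : (fun ζ : Conf E => rho φ (update ζ j b) (update ζ j a)) =
        fun ζ => rho φ (upd0 (shiftZ j ζ) b) (upd0 (shiftZ j ζ) a) :=
      funext fun ζ => (tendsto_rhoN_update hφc hφe ζ j a b).limUnder_eq
    change Continuous fun ζ : Conf E => rho φ (update ζ j b) (update ζ j a)
    rw [h]
    exact (hφe.continuous_rho_upd0 hφc a b).comp (continuous_shiftZ j)
  refine (hpair.comp ((continuous_apply j).prodMk continuous_id)).congr fun ζ => ?_
  change rho φ (update ζ j b) (update ζ j (ζ j)) = _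
  rw [update_eq_self]

lemma continuous_rho_piecewise (hφc : Continuous φ) (hφe : Extensible φ) (F : Finset ℤ)
    (ξ : Conf E) : Continuous fun ω => rho φ (F.piecewise ξ ω) ω := by
  induction F using Finset.induction_on with
  | empty => simpa only [piecewise_empty, rho_self] using continuous_const
  | insert j F _ ih =>
    have hsplit (ω : Conf E) := rho_add hφc hφe (finDiff_update (F.piecewise ξ ω) j (ξ j))
      (finDiff_piecewise F ξ ω)
    simp only [piecewise_insert, hsplit]
    exact ((continuous_rho_update hφc hφe j (ξ j)).comp
      (continuous_piecewise_right F ξ)).add ih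

lemma continuous_rho_ovr (hφc : Continuous φ) (hφe : Extensible φ) (Λ : Finset ℤ)
    (ξ : {k // k ∈ Λ} → E) : Continuous fun ω => rho φ (ovr Λ ξ ω) ω := by
  refine continuous_iff_continuousAt.2 fun ω₀ => ?_
  have h : (fun ω => rho φ (ovr Λ ξ ω) ω) = fun ω => rho φ (Λ.piecewise (ovr Λ ξ ω₀) ω) ω :=
    funext fun ω => by rw [ovr_eq_piecewise Λ ξ ω ω₀]
  rw [h]
  exact (continuous_rho_piecewise hφc hφe Λ _).continuousAt

end Continuity

section PartitionFunction

variable [Fintype E] {φ : Conf E → ℝ}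

noncomputable def partitionFn (φ : Conf E → ℝ) (Λ : Finset ℤ) (ω : Conf E) : ℝ :=
  ∑ ξ : {k // k ∈ Λ} → E, Real.exp (rho φ (ovr Λ ξ ω) ω)

lemma specOf_apply (φ : Conf E → ℝ) (Λ : Finset ℤ) (ω : Conf E) :
    specOf φ Λ ω = (partitionFn φ Λ ω)⁻¹ := rfl

lemma partitionFn_pos (φ : Conf E → ℝ) (Λ : Finset ℤ) (ω : Conf E) :
    0 < partitionFn φ Λ ω :=
  sum_pos (fun _ _ => Real.exp_pos _) ⟨fun k => ω k, mem_univ _⟩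

variable [TopologicalSpace E]

lemma partitionFn_ovr (hφc : Continuous φ) (hφe : Extensible φ) {V Λ : Finset ℤ} (hVΛ : V ⊆ Λ)
    (η : {k // k ∈ V} → E) (ω : Conf E) :
    partitionFn φ Λ (ovr V η ω) = Real.exp (-rho φ (ovr V η ω) ω) * partitionFn φ Λ ω := by
  rw [partitionFn, partitionFn, mul_sum]
  refine sum_congr rfl fun ξ _ => ?_
  rw [ovr_ovr hVΛ, rho_eq_sub hφc hφe (finDiff_ovr Λ ξ ω) (finDiff_ovr V η ω), ← Real.exp_add]
  ring_nf

lemma sum_specOf_ovr (hφc : Continuous φ) (hφe : Extensible φ) {V Λ : Finset ℤ} (hVΛ : V ⊆ Λ)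
    (ω : Conf E) :
    ∑ η : {k // k ∈ V} → E, specOf φ Λ (ovr V η ω) = partitionFn φ V ω / partitionFn φ Λ ω := by
  simp only [specOf_apply, partitionFn_ovr hφc hφe hVΛ, mul_inv, Real.exp_neg, inv_inv,
    ← sum_mul, div_eq_mul_inv]
  rfl

lemma partitionFn_image_add (hφc : Continuous φ) (hφe : Extensible φ) (Λ : Finset ℤ) (i : ℤ)
    (ω : Conf E) : partitionFn φ (Λ.image (· + i)) ω = partitionFn φ Λ (shiftZ i ω) := by
  let e : {k // k ∈ Λ} ≃ {k // k ∈ Λ.image (· + i)} :=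
    (Equiv.addRight i).subtypeEquiv fun k => by simp
  refine (Fintype.sum_equiv (e.arrowCongr (Equiv.refl E)) _ _ fun ξ => ?_).symm
  have hshift : shiftZ i (ovr _ (e.arrowCongr (Equiv.refl E) ξ) ω) = ovr Λ ξ (shiftZ i ω) := by
    funext k
    simp [shiftZ, ovr, e]
  rw [← rho_shiftZ hφc hφe (finDiff_ovr _ _ ω) i, hshift]

end PartitionFunction

section Specification

variable [Fintype E] [TopologicalSpace E] {φ : Conf E → ℝ}

lemma isSpecification_specOf (hφc : Continuous φ) (hφe : Extensible φ) :
    IsSpecification (specOf φ) := by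
  refine ⟨fun Λ ω => (inv_pos.2 (partitionFn_pos φ Λ ω)).le, fun Λ ω => ?_,
    fun V Λ hVΛ ω => ?_⟩
  · rw [sum_specOf_ovr hφc hφe subset_rfl, div_self (partitionFn_pos φ Λ ω).ne']
  · have := (partitionFn_pos φ V ω).ne'
    rw [sum_specOf_ovr hφc hφe hVΛ, specOf_apply, specOf_apply]
    field_simp

lemma specTI_specOf (hφc : Continuous φ) (hφe : Extensible φ) : SpecTI (specOf φ) :=
  fun Λ ω => by rw [specOf_apply, specOf_apply, partitionFn_image_add hφc hφe]

variable [DiscreteTopology E]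

lemma continuous_partitionFn (hφc : Continuous φ) (hφe : Extensible φ) (Λ : Finset ℤ) :
    Continuous (partitionFn φ Λ) :=
  continuous_finsetSum _ fun ξ _ => Real.continuous_exp.comp (continuous_rho_ovr hφc hφe Λ ξ)

lemma contSpec_specOf (hφc : Continuous φ) (hφe : Extensible φ) : ContSpec (specOf φ) :=
  fun Λ => (continuous_partitionFn hφc hφe Λ).inv₀ fun ω => (partitionFn_pos φ Λ ω).ne'

lemma nonNull_specOf (hφc : Continuous φ) (hφe : Extensible φ) : NonNull (specOf φ) := by
  intro Λ
  obtain ⟨M, hM⟩ := (isCompact_range (continuous_partitionFn hφc hφe Λ)).bddAbove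
  refine ⟨(max M 1)⁻¹, by positivity, fun ω => ?_⟩
  rw [specOf_apply]
  exact inv_anti₀ (partitionFn_pos φ Λ ω) ((hM ⟨ω, rfl⟩).trans (le_max_left M 1))

end Specification

theorem specOf_isGibbsSpec_general [Fintype E] [TopologicalSpace E] [DiscreteTopology E]
    (φ : Conf E → ℝ) (hφc : Continuous φ) (hφe : Extensible φ) :
    IsGibbsSpec (specOf φ) ∧ SpecTI (specOf φ) :=
  ⟨⟨isSpecification_specOf hφc hφe, nonNull_specOf hφc hφe, contSpec_specOf hφc hφe⟩,
    specTI_specOf hφc hφe⟩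

/-- For `φ` continuous with the extensibility property, the family
`γ^φ_Λ(ω_Λ|ω_{Λ^c}) = (∑_{ξ_Λ} exp ρ^φ(ξ_Λ ω_{ℤ∖Λ}, ω))⁻¹` is a translation-invariant
Gibbsian specification (a consistent family of probability kernels, non-null and
continuous, with `γ^φ_{Λ+1} = γ^φ_Λ ∘ S`). -/
theorem specOf_isGibbsSpec [Fintype E] [Nonempty E] [TopologicalSpace E] [DiscreteTopology E]
    [MeasurableSpace E] [MeasurableSingletonClass E]
    (φ : Conf E → ℝ) (hφc : Continuous φ) (hφe : Extensible φ) :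
    IsGibbsSpec (specOf φ) ∧ SpecTI (specOf φ) :=
  specOf_isGibbsSpec_general φ hφc hφe

end GP
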